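/- arXiv:2103.02605 — 4 statements merged into one kernel-verified Lean document; each statement's English description precedes it below -/
import Mathlib

section
/- Let R be a commutative ring, let s ∈ R, let f = s², and let A be an f-circulant 2m × 2m matrix over R with block form [[A₁, A₂], [f·A₂, A₁]] where A₁ is the top-left m × m block and A₂ the top-right m × m block. Then the m × m matrix A₁ + s·A₂ is an s-circulant matrix. -/
/-- An `n × n` matrix `A` over a commutative ring `R` is `f`-circulant if
`a_{(i+1)(j+1)} = a_{ij}` for all valid indices, and the wrap-around condition
`a_{(i+1)1} = f * a_{in}` holds (0-indexed here). -/
def IsFCirculant {R : Type*} [CommRing R] {n : ℕ} (f : R)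
    (A : Matrix (Fin n) (Fin n) R) : Prop :=
  (∀ (i j : Fin n) (hi : i.val + 1 < n) (hj : j.val + 1 < n),
      A ⟨i.val + 1, hi⟩ ⟨j.val + 1, hj⟩ = A i j) ∧
  (∀ (i : Fin n) (hi : i.val + 1 < n),
      A ⟨i.val + 1, hi⟩ ⟨0, by omega⟩ = f * A i ⟨n - 1, by omega⟩)

/-- If `A` is an `s²`-circulant `2m × 2m` matrix with top-left block `A₁` and
top-right block `A₂`, then `A₁ + s·A₂` is an `s`-circulant `m × m` matrix. -/
theorem add_smul_block_isSCirculant {R : Type*} [CommRing R] (m : ℕ) (s : R)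
    (A : Matrix (Fin (m + m)) (Fin (m + m)) R) (hA : IsFCirculant (s ^ 2) A) :
    IsFCirculant s
      ((Matrix.of fun i j : Fin m => A (Fin.castAdd m i) (Fin.castAdd m j)) +
        s • (Matrix.of fun i j : Fin m => A (Fin.castAdd m i) (Fin.natAdd m j))) := by
  obtain ⟨h1, h2⟩ := hA
  constructor
  · intro i j hi hj
    simp only [Matrix.add_apply, Matrix.smul_apply, Matrix.of_apply, smul_eq_mul]
    have e1 : A (Fin.castAdd m ⟨i.val + 1, hi⟩) (Fin.castAdd m ⟨j.val + 1, hj⟩)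
        = A (Fin.castAdd m i) (Fin.castAdd m j) := by
      have := h1 (Fin.castAdd m i) (Fin.castAdd m j) (by simp [Fin.castAdd]; omega)
        (by simp [Fin.castAdd]; omega)
      convert this using 2 <;> simp [Fin.castAdd, Fin.ext_iff]
    have e2 : A (Fin.castAdd m ⟨i.val + 1, hi⟩) (Fin.natAdd m ⟨j.val + 1, hj⟩)
        = A (Fin.castAdd m i) (Fin.natAdd m j) := by
      have := h1 (Fin.castAdd m i) (Fin.natAdd m j) (by simp [Fin.castAdd]; omega)
        (by simp [Fin.natAdd]; omega)
      convert this using 2 <;> simp [Fin.castAdd, Fin.natAdd, Fin.ext_iff] <;> omega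
    rw [e1, e2]
  · intro i hi
    simp only [Matrix.add_apply, Matrix.smul_apply, Matrix.of_apply, smul_eq_mul]
    have hm : 0 < m := by omega
    have e1 : A (Fin.castAdd m ⟨i.val + 1, hi⟩) (Fin.castAdd m ⟨0, hm⟩)
        = s ^ 2 * A (Fin.castAdd m i) ⟨m + m - 1, by omega⟩ := by
      have := h2 (Fin.castAdd m i) (by simp [Fin.castAdd]; omega)
      convert this using 2 <;> simp [Fin.castAdd, Fin.ext_iff]
    have e2 : A (Fin.castAdd m ⟨i.val + 1, hi⟩) (Fin.natAdd m ⟨0, hm⟩)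
        = A (Fin.castAdd m i) (Fin.castAdd m ⟨m - 1, by omega⟩) := by
      have := h1 (Fin.castAdd m i) (Fin.castAdd m ⟨m - 1, by omega⟩)
        (by simp [Fin.castAdd]; omega) (by simp [Fin.castAdd]; omega)
      convert this using 2 <;> simp [Fin.castAdd, Fin.natAdd, Fin.ext_iff] <;> omega
    have e3 : Fin.natAdd m (⟨m - 1, by omega⟩ : Fin m)
        = (⟨m + m - 1, by omega⟩ : Fin (m + m)) := by
      simp [Fin.natAdd, Fin.ext_iff]; omega
    rw [e1, e2, e3]
    ring
end

section
/- Let R be a commutative ring, let s ∈ R, let f = s², and let A be an f-circulant 2m × 2m matrix over R with block form [[A₁, A₂], [f·A₂, A₁]] where A₁ is the top-left m × m block and A₂ the top-right m × m block. Then the m × m matrix A₁ − s·A₂ is a (−s)-circulant matrix. -/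
/-- If `A` is an `s²`-circulant `2m × 2m` matrix with top-left block `A₁` and
top-right block `A₂`, then `A₁ - s·A₂` is a `(-s)`-circulant `m × m` matrix. -/
theorem sub_smul_block_isNegSCirculant {R : Type*} [CommRing R] (m : ℕ) (s : R)
    (A : Matrix (Fin (m + m)) (Fin (m + m)) R) (hA : IsFCirculant (s ^ 2) A) :
    IsFCirculant (-s)
      ((Matrix.of fun i j : Fin m => A (Fin.castAdd m i) (Fin.castAdd m j)) -
        s • (Matrix.of fun i j : Fin m => A (Fin.castAdd m i) (Fin.natAdd m j))) := by
  obtain ⟨h1, h2⟩ := hA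
  have H1 : ∀ a b (ha : a + 1 < m + m) (hb : b + 1 < m + m),
      A ⟨a + 1, ha⟩ ⟨b + 1, hb⟩ = A ⟨a, by omega⟩ ⟨b, by omega⟩ :=
    fun a b ha hb => h1 ⟨a, by omega⟩ ⟨b, by omega⟩ ha hb
  have H2 : ∀ a (ha : a + 1 < m + m),
      A ⟨a + 1, ha⟩ ⟨0, by omega⟩ = s ^ 2 * A ⟨a, by omega⟩ ⟨m + m - 1, by omega⟩ :=
    fun a ha => h2 ⟨a, by omega⟩ ha
  constructor
  · intro i j hi hj
    simp only [Matrix.sub_apply, Matrix.smul_apply, Matrix.of_apply, smul_eq_mul,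
      Fin.castAdd_mk, Fin.natAdd_mk]
    simp only [Fin.castAdd, Fin.castLE, Fin.natAdd]
    have e1 := H1 i.val j.val (by omega) (by omega)
    have e2 : A ⟨i.val + 1, by omega⟩ ⟨m + (j.val + 1), by omega⟩
        = A ⟨i.val, by omega⟩ ⟨m + j.val, by omega⟩ := H1 i.val (m + j.val) (by omega) (by omega)
    rw [e1, e2]
  · intro i hi
    simp only [Matrix.sub_apply, Matrix.smul_apply, Matrix.of_apply, smul_eq_mul,
      Fin.castAdd, Fin.castLE, Fin.natAdd]
    have e0 := H2 i.val (by omega)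
    have e1 := H1 i.val (m - 1) (by omega) (by omega)
    have key : (⟨m - 1 + 1, by omega⟩ : Fin (m + m)) = ⟨m + (0 : ℕ), by omega⟩ :=
      Fin.ext (by simp; omega)
    have key2 : (⟨m + m - 1, by omega⟩ : Fin (m + m)) = ⟨m + (m - 1), by omega⟩ :=
      Fin.ext (by simp; omega)
    rw [key] at e1
    rw [key2] at e0
    rw [e0, e1]
    ring
end

section
/- Let R be a commutative ring in which 2 is invertible, let s ∈ R be invertible, and let f = s². Let A₁, A₂ be m × m matrices over R and let b₁, b₂ be vectors in R^m. Define the vectors M₁ := (A₁ + s·A₂)·(s·b₁ + b₂) and M₂ := (A₁ − s·A₂)·(s·b₁ − b₂). Then (M₁ + M₂)·(2s)⁻¹ = A₁·b₁ + A₂·b₂ and (M₁ + M₂)·2⁻¹ − M₂ = f·A₂·b₁ + A₁·b₂. In particular, if A is the block matrix [[A₁, A₂], [f·A₂, A₁]] and b = (b₁, b₂)ᵀ, then A·b = (c₁, c₂)ᵀ with c₁ = (M₁ + M₂)/(2s) and c₂ = (M₁ + M₂)/2 − M₂. -/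
/-!
Expanding the two products, the terms `s • (A₁ *ᵥ b₁)` and `s • (A₂ *ᵥ b₂)` appear with the
same sign in `M₁` and `M₂`, while `A₁ *ᵥ b₂` and `s ^ 2 • (A₂ *ᵥ b₁)` appear with opposite
signs. Hence `M₁ + M₂ = 2s (A₁b₁ + A₂b₂)` and `M₁ - M₂ = 2 (s²A₂b₁ + A₁b₂)`, and the second
output is `(M₁ + M₂)/2 - M₂ = (M₁ - M₂)/2`.
-/

namespace Matrix

variable {n R : Type*} [Fintype n] [CommRing R]

theorem add_smul_mulVec_add_sub_smul_mulVec_sub (s : R) (A₁ A₂ : Matrix n n R)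
    (b₁ b₂ : n → R) :
    (A₁ + s • A₂) *ᵥ (s • b₁ + b₂) + (A₁ - s • A₂) *ᵥ (s • b₁ - b₂) =
      (2 * s) • (A₁ *ᵥ b₁ + A₂ *ᵥ b₂) := by
  simp only [add_mulVec, sub_mulVec, mulVec_add, mulVec_sub, smul_mulVec, mulVec_smul]
  module

theorem add_smul_mulVec_add_sub_sub_smul_mulVec_sub (s : R) (A₁ A₂ : Matrix n n R)
    (b₁ b₂ : n → R) :
    (A₁ + s • A₂) *ᵥ (s • b₁ + b₂) - (A₁ - s • A₂) *ᵥ (s • b₁ - b₂) =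
      (2 : R) • (s ^ 2 • (A₂ *ᵥ b₁) + A₁ *ᵥ b₂) := by
  simp only [add_mulVec, sub_mulVec, mulVec_add, mulVec_sub, smul_mulVec, mulVec_smul]
  module

end Matrix

open Matrix

theorem invOf_two_smul_add_sub {R M : Type*} [Ring R] [Invertible (2 : R)] [AddCommGroup M]
    [Module R M] (x y : M) : ⅟(2 : R) • (x + y) - y = ⅟(2 : R) • (x - y) := by
  calc ⅟(2 : R) • (x + y) - y = ⅟(2 : R) • (x + y) - (⅟(2 : R) • y + ⅟(2 : R) • y) := by
        rw [invOf_two_smul_add_invOf_two_smul]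
    _ = ⅟(2 : R) • (x - y) := by
        rw [smul_add, smul_sub]
        abel

/-- Correctness of the two-multiplication scheme for a block matrix
`[[A₁, A₂], [f·A₂, A₁]]` with `f = s²`: with
`M₁ = (A₁ + s·A₂)·(s·b₁ + b₂)` and `M₂ = (A₁ - s·A₂)·(s·b₁ - b₂)` one has
`(M₁ + M₂)/(2s) = A₁·b₁ + A₂·b₂` and `(M₁ + M₂)/2 - M₂ = f·A₂·b₁ + A₁·b₂`,
so the block matrix-vector product is `(c₁, c₂)` with
`c₁ = (M₁ + M₂)/(2s)` and `c₂ = (M₁ + M₂)/2 - M₂`. -/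
theorem two_mult_scheme {R : Type*} [CommRing R] (m : ℕ) (s : R)
    [Invertible (2 : R)] [Invertible s]
    (A₁ A₂ : Matrix (Fin m) (Fin m) R) (b₁ b₂ : Fin m → R) :
    let M₁ := (A₁ + s • A₂).mulVec (s • b₁ + b₂)
    let M₂ := (A₁ - s • A₂).mulVec (s • b₁ - b₂)
    letI : Invertible (2 * s) := invertibleMul 2 s
    (⅟(2 * s)) • (M₁ + M₂) = A₁.mulVec b₁ + A₂.mulVec b₂ ∧
    (⅟(2 : R)) • (M₁ + M₂) - M₂ = (s ^ 2) • A₂.mulVec b₁ + A₁.mulVec b₂ ∧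
    (Matrix.fromBlocks A₁ A₂ ((s ^ 2) • A₂) A₁).mulVec (Sum.elim b₁ b₂)
      = Sum.elim ((⅟(2 * s)) • (M₁ + M₂)) ((⅟(2 : R)) • (M₁ + M₂) - M₂) := by
  intro M₁ M₂
  let _ : Invertible (2 * s) := invertibleMul 2 s
  have hc₁ : ⅟(2 * s) • (M₁ + M₂) = A₁ *ᵥ b₁ + A₂ *ᵥ b₂ := by
    rw [add_smul_mulVec_add_sub_smul_mulVec_sub, invOf_smul_smul]
  have hc₂ : ⅟(2 : R) • (M₁ + M₂) - M₂ = s ^ 2 • (A₂ *ᵥ b₁) + A₁ *ᵥ b₂ := by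
    rw [invOf_two_smul_add_sub, add_smul_mulVec_add_sub_sub_smul_mulVec_sub,
      invOf_smul_smul]
  refine ⟨hc₁, hc₂, ?_⟩
  rw [fromBlocks_mulVec, hc₁, hc₂, smul_mulVec]
  rfl
end

section
/- Let R be a commutative ring in which 2 is invertible, let s ∈ R be invertible, let f = s², let m ≥ 1, and let A be an f-circulant 2m × 2m matrix with block form [[A₁, A₂], [f·A₂, A₁]]. Let b = (b₁, b₂)ᵀ ∈ R^{2m} with b₁, b₂ ∈ R^m. Then the product A·b = (c₁, c₂)ᵀ satisfies c₁ = (M₁ + M₂)·(2s)⁻¹ and c₂ = (M₁ + M₂)·2⁻¹ − M₂, where M₁ = (A₁ + s·A₂)·(s·b₁ + b₂) and M₂ = (A₁ − s·A₂)·(s·b₁ − b₂); moreover A₁ + s·A₂ is an s-circulant m × m matrix and A₁ − s·A₂ is a (−s)-circulant m × m matrix, so the computation of A·b reduces to two circulant matrix-vector products of half the size. -/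
lemma circ_entry {R : Type*} [CommRing R] {n : ℕ} {f : R}
    {A : Matrix (Fin n) (Fin n) R} (h : IsFCirculant f A) (i j : Fin n) :
    A i j = if h' : (i : ℕ) ≤ j then
        A ⟨0, i.pos⟩ ⟨(j : ℕ) - i, by omega⟩
      else f * A ⟨0, i.pos⟩ ⟨n + (j : ℕ) - i, by omega⟩ := by
  obtain ⟨i, hi⟩ := i
  induction i generalizing j with
  | zero =>
      rw [dif_pos (Nat.zero_le _)]
      exact congrArg _ (Fin.ext (by simp))
  | succ i ih =>
      have hi' : i < n := by omega
      obtain ⟨j, hj⟩ := j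
      match j with
      | 0 =>
          rw [dif_neg (by simp), h.2 ⟨i, hi'⟩ hi, ih ⟨n - 1, by omega⟩ hi',
            dif_pos (by simp; omega)]
          exact congrArg _ (congrArg _ (Fin.ext (by simp; omega)))
      | j + 1 =>
          rw [h.1 ⟨i, hi'⟩ ⟨j, by omega⟩ hi hj, ih ⟨j, by omega⟩ hi']
          by_cases hij : i ≤ j
          · rw [dif_pos (by simpa using hij), dif_pos (by simpa using hij)]
            exact congrArg _ (Fin.ext (by simp))
          · rw [dif_neg (by simpa using hij), dif_neg (by simpa using hij)]
            exact congrArg _ (congrArg _ (Fin.ext (by simp; omega)))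

lemma block_BL {R : Type*} [CommRing R] {m : ℕ} {f : R}
    {A : Matrix (Fin (m + m)) (Fin (m + m)) R} (h : IsFCirculant f A) :
    ∀ i j : Fin m, A (Fin.natAdd m i) (Fin.castAdd m j)
      = f * A (Fin.castAdd m i) (Fin.natAdd m j) := by
  intro i j
  rw [circ_entry h, circ_entry h,
    dif_neg (by simp only [Fin.coe_natAdd, Fin.coe_castAdd]; omega),
    dif_pos (by simp only [Fin.coe_natAdd, Fin.coe_castAdd]; omega)]
  exact congrArg _ (congrArg _ (Fin.ext (by simp; omega)))

lemma block_BR {R : Type*} [CommRing R] {m : ℕ} {f : R}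
    {A : Matrix (Fin (m + m)) (Fin (m + m)) R} (h : IsFCirculant f A) :
    ∀ i j : Fin m, A (Fin.natAdd m i) (Fin.natAdd m j)
      = A (Fin.castAdd m i) (Fin.castAdd m j) := by
  intro i j
  rw [circ_entry h, circ_entry h]
  by_cases hij : (i : ℕ) ≤ j
  · rw [dif_pos (by simp only [Fin.coe_natAdd]; omega),
      dif_pos (by simpa using hij)]
    exact congrArg _ (Fin.ext (by simp; omega))
  · rw [dif_neg (by simp only [Fin.coe_natAdd]; omega),
      dif_neg (by simpa using hij)]
    exact congrArg _ (congrArg _ (Fin.ext (by simp; omega)))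

/-- The recursive step of the fast circulant matrix-vector product: for an
`s²`-circulant `2m × 2m` matrix `A` with top blocks `A₁, A₂` and a vector
`b = (b₁, b₂)`, the product `A·b = (c₁, c₂)` satisfies
`c₁ = (M₁ + M₂)/(2s)` and `c₂ = (M₁ + M₂)/2 - M₂` with
`M₁ = (A₁ + s·A₂)·(s·b₁ + b₂)` and `M₂ = (A₁ - s·A₂)·(s·b₁ - b₂)`; moreover
`A₁ + s·A₂` is `s`-circulant and `A₁ - s·A₂` is `(-s)`-circulant. -/
theorem fast_circulant_recursive_step {R : Type*} [CommRing R] (m : ℕ) (hm : 1 ≤ m)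
    (s : R) [Invertible (2 : R)] [Invertible s]
    (A : Matrix (Fin (m + m)) (Fin (m + m)) R) (hA : IsFCirculant (s ^ 2) A)
    (b : Fin (m + m) → R) :
    let A₁ : Matrix (Fin m) (Fin m) R :=
      Matrix.of fun i j => A (Fin.castAdd m i) (Fin.castAdd m j)
    let A₂ : Matrix (Fin m) (Fin m) R :=
      Matrix.of fun i j => A (Fin.castAdd m i) (Fin.natAdd m j)
    let b₁ : Fin m → R := fun i => b (Fin.castAdd m i)
    let b₂ : Fin m → R := fun i => b (Fin.natAdd m i)
    let M₁ := (A₁ + s • A₂).mulVec (s • b₁ + b₂)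
    let M₂ := (A₁ - s • A₂).mulVec (s • b₁ - b₂)
    letI : Invertible (2 * s) := invertibleMul 2 s
    (∀ i : Fin m, A.mulVec b (Fin.castAdd m i) = ⅟(2 * s) * (M₁ i + M₂ i)) ∧
    (∀ i : Fin m, A.mulVec b (Fin.natAdd m i) = ⅟(2 : R) * (M₁ i + M₂ i) - M₂ i) ∧
    IsFCirculant s (A₁ + s • A₂) ∧
    IsFCirculant (-s) (A₁ - s • A₂) := by
  dsimp only
  have hBL := block_BL hA
  have hBR := block_BR hA
  -- expansions of mulVec as sums over Fin m
  have hrow1 : ∀ i : Fin m, A.mulVec b (Fin.castAdd m i)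
      = (∑ j : Fin m, A (Fin.castAdd m i) (Fin.castAdd m j) * b (Fin.castAdd m j))
        + ∑ j : Fin m, A (Fin.castAdd m i) (Fin.natAdd m j) * b (Fin.natAdd m j) := by
    intro i
    simp only [Matrix.mulVec, dotProduct]
    exact Fin.sum_univ_add _
  have hrow2 : ∀ i : Fin m, A.mulVec b (Fin.natAdd m i)
      = (∑ j : Fin m, s ^ 2 * A (Fin.castAdd m i) (Fin.natAdd m j) * b (Fin.castAdd m j))
        + ∑ j : Fin m, A (Fin.castAdd m i) (Fin.castAdd m j) * b (Fin.natAdd m j) := by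
    intro i
    simp only [Matrix.mulVec, dotProduct]
    rw [Fin.sum_univ_add (fun j => A (Fin.natAdd m i) j * b j)]
    simp only [hBL, hBR]
  have hM1 : ∀ i : Fin m,
      ((Matrix.of fun i j => A (Fin.castAdd m i) (Fin.castAdd m j))
        + s • Matrix.of fun i j => A (Fin.castAdd m i) (Fin.natAdd m j)).mulVec
        ((s • fun i => b (Fin.castAdd m i)) + fun i => b (Fin.natAdd m i)) i
      = ∑ j : Fin m, (A (Fin.castAdd m i) (Fin.castAdd m j)
          + s * A (Fin.castAdd m i) (Fin.natAdd m j))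
          * (s * b (Fin.castAdd m j) + b (Fin.natAdd m j)) := by
    intro i
    simp only [Matrix.mulVec, dotProduct, Matrix.add_apply, Matrix.smul_apply,
      Matrix.of_apply, Pi.add_apply, Pi.smul_apply, smul_eq_mul]
  have hM2 : ∀ i : Fin m,
      ((Matrix.of fun i j => A (Fin.castAdd m i) (Fin.castAdd m j))
        - s • Matrix.of fun i j => A (Fin.castAdd m i) (Fin.natAdd m j)).mulVec
        ((s • fun i => b (Fin.castAdd m i)) - fun i => b (Fin.natAdd m i)) i
      = ∑ j : Fin m, (A (Fin.castAdd m i) (Fin.castAdd m j)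
          - s * A (Fin.castAdd m i) (Fin.natAdd m j))
          * (s * b (Fin.castAdd m j) - b (Fin.natAdd m j)) := by
    intro i
    simp only [Matrix.mulVec, dotProduct, Matrix.sub_apply, Matrix.smul_apply,
      Matrix.of_apply, Pi.sub_apply, Pi.smul_apply, smul_eq_mul]
  have hc1 : ∀ i : Fin m,
      ((Matrix.of fun i j => A (Fin.castAdd m i) (Fin.castAdd m j))
        + s • Matrix.of fun i j => A (Fin.castAdd m i) (Fin.natAdd m j)).mulVec
        ((s • fun i => b (Fin.castAdd m i)) + fun i => b (Fin.natAdd m i)) i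
      + ((Matrix.of fun i j => A (Fin.castAdd m i) (Fin.castAdd m j))
        - s • Matrix.of fun i j => A (Fin.castAdd m i) (Fin.natAdd m j)).mulVec
        ((s • fun i => b (Fin.castAdd m i)) - fun i => b (Fin.natAdd m i)) i
      = (2 * s) * A.mulVec b (Fin.castAdd m i) := by
    intro i
    rw [hM1 i, hM2 i, hrow1 i, mul_add, Finset.mul_sum, Finset.mul_sum,
      ← Finset.sum_add_distrib, ← Finset.sum_add_distrib]
    exact Finset.sum_congr rfl fun j _ => by ring
  have hc2 : ∀ i : Fin m,
      ((Matrix.of fun i j => A (Fin.castAdd m i) (Fin.castAdd m j))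
        - s • Matrix.of fun i j => A (Fin.castAdd m i) (Fin.natAdd m j)).mulVec
        ((s • fun i => b (Fin.castAdd m i)) - fun i => b (Fin.natAdd m i)) i
      = s * A.mulVec b (Fin.castAdd m i) - A.mulVec b (Fin.natAdd m i) := by
    intro i
    rw [hM2 i, hrow1 i, hrow2 i, mul_add, Finset.mul_sum, Finset.mul_sum,
      ← Finset.sum_add_distrib, ← Finset.sum_add_distrib, ← Finset.sum_sub_distrib]
    exact Finset.sum_congr rfl fun j _ => by ring
  have hAcc : ∀ (i j : Fin m) (hi : (i : ℕ) + 1 < m) (hj : (j : ℕ) + 1 < m),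
      A (Fin.castAdd m ⟨i + 1, hi⟩) (Fin.castAdd m ⟨j + 1, hj⟩)
        = A (Fin.castAdd m i) (Fin.castAdd m j) := by
    intro i j hi hj
    have := hA.1 (Fin.castAdd m i) (Fin.castAdd m j) (by simp; omega) (by simp; omega)
    convert this using 2 <;> exact Fin.ext (by simp)
  have hAcn : ∀ (i j : Fin m) (hi : (i : ℕ) + 1 < m) (hj : (j : ℕ) + 1 < m),
      A (Fin.castAdd m ⟨i + 1, hi⟩) (Fin.natAdd m ⟨j + 1, hj⟩)
        = A (Fin.castAdd m i) (Fin.natAdd m j) := by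
    intro i j hi hj
    have := hA.1 (Fin.castAdd m i) (Fin.natAdd m j) (by simp; omega) (by simp; omega)
    convert this using 2 <;> exact Fin.ext (by simp <;> omega)
  have hA0c : ∀ (i : Fin m) (hi : (i : ℕ) + 1 < m),
      A (Fin.castAdd m ⟨i + 1, hi⟩) (Fin.castAdd m ⟨0, by omega⟩)
        = s ^ 2 * A (Fin.castAdd m i) (Fin.natAdd m ⟨m - 1, by omega⟩) := by
    intro i hi
    have := hA.2 (Fin.castAdd m i) (by simp; omega)
    convert this using 3 <;> first | rfl | exact Fin.ext (by simp; omega)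
  have hA0n : ∀ (i : Fin m) (hi : (i : ℕ) + 1 < m),
      A (Fin.castAdd m ⟨i + 1, hi⟩) (Fin.natAdd m ⟨0, by omega⟩)
        = A (Fin.castAdd m i) (Fin.castAdd m ⟨m - 1, by omega⟩) := by
    intro i hi
    have := hA.1 (Fin.castAdd m i) ⟨m - 1, by omega⟩ (by simp; omega) (show m - 1 + 1 < m + m by omega)
    convert this using 2 <;> exact Fin.ext (by simp <;> omega)
  refine ⟨fun i => ?_, fun i => ?_, ?_, ?_⟩
  · rw [hc1 i, ← mul_assoc, invOf_mul_self, one_mul]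
  · rw [hc1 i, hc2 i, show (2 * s) * A.mulVec b (Fin.castAdd m i)
      = 2 * (s * A.mulVec b (Fin.castAdd m i)) from by ring,
      ← mul_assoc, invOf_mul_self, one_mul]
    ring
  · constructor
    · intro i j hi hj
      simp only [Matrix.add_apply, Matrix.smul_apply, Matrix.of_apply, smul_eq_mul]
      rw [hAcc i j hi hj, hAcn i j hi hj]
    · intro i hi
      simp only [Matrix.add_apply, Matrix.smul_apply, Matrix.of_apply, smul_eq_mul]
      rw [hA0c i hi, hA0n i hi]
      ring
  · constructor
    · intro i j hi hj
      simp only [Matrix.sub_apply, Matrix.smul_apply, Matrix.of_apply, smul_eq_mul]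
      rw [hAcc i j hi hj, hAcn i j hi hj]
    · intro i hi
      simp only [Matrix.sub_apply, Matrix.smul_apply, Matrix.of_apply, smul_eq_mul]
      rw [hA0c i hi, hA0n i hi]
      ring
end
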